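/- arXiv:1601.03938 — 9 statements merged into one kernel-verified Lean document; each statement's English description precedes it below -/
import Mathlib

section
/- For all nonnegative integers i, j, k, the product C(k,i)·C(k+i,i)·C(k,j)·C(k+j,j) equals ∑_{r=0}^{i} C(i+j,i)·C(j,i−r)·C(j+r,r)·C(k,j+r)·C(k+j+r,j+r). -/
/-!
Trinomial revision, `C(n, a) C(a, b) = C(n, b) C(n - b, a - b)`, pulls the factor
`C(i+j, i) C(k+j, j)` out of both sides, which reduces the identity to the terminating
Pfaff–Saalschütz sum `∑_r C(j, i-r) C(k+j+r, r) C(k, j+r) = C(k, i) C(k+i, i+j)`.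
Both sides of it satisfy `(i+1)(i+j+1) S(i+1) = (k-i)(k+i+1) S(i)` with `S(0) = C(k, j)`:
for the product of binomials this is absorption, and for the sum it follows by summing a
Zeilberger certificate over `r`, which telescopes.
-/

open Finset

theorem eq_of_mul_succ_eq_mul {M : Type*} [MulZeroClass M] [IsLeftCancelMulZero M]
    {a b f g : ℕ → M}
    (ha : ∀ i, a i ≠ 0) (hf : ∀ i, a i * f (i + 1) = b i * f i)
    (hg : ∀ i, a i * g (i + 1) = b i * g i) (h0 : f 0 = g 0) : f = g := by
  funext i
  induction i with
  | zero => exact h0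
  | succ i ih => exact mul_left_cancel₀ (ha i) (by rw [hf, hg, ih])

theorem choose_add_mul_choose_add (a b c : ℕ) :
    (a + b).choose (c + b) * (c + b).choose b = (a + b).choose b * a.choose c := by
  simpa using Nat.choose_mul (n := a + b) (Nat.le_add_left b c)

theorem natCast_succ_mul_choose_succ (n m : ℕ) :
    ((m : ℤ) + 1) * n.choose (m + 1) = ((n : ℤ) - m) * n.choose m := by
  rcases le_or_gt m n with h | h
  · have := congrArg (Nat.cast : ℕ → ℤ) (Nat.choose_succ_right_eq n m)
    push_cast [Nat.cast_sub h] at this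
    linarith
  · simp [Nat.choose_eq_zero_of_lt h, Nat.choose_eq_zero_of_lt (Nat.lt_succ_of_lt h)]

theorem natCast_succ_mul_choose_succ_succ (n m : ℕ) :
    ((m : ℤ) + 1) * (n + 1).choose (m + 1) = ((n : ℤ) + 1) * n.choose m := by
  have := congrArg (Nat.cast : ℕ → ℤ) (Nat.add_one_mul_choose_eq n m)
  push_cast at this
  linarith

section Saalschutz

variable (k j : ℕ)

def saalschutzTerm (i r : ℕ) : ℕ :=
  j.choose (i - r) * (k + j + r).choose r * k.choose (j + r)

theorem saalschutzTerm_certificate {i r : ℕ} (hri : r ≤ i) :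
    ((i : ℤ) + 1 - r) * ((i : ℤ) + j + r + 1) * saalschutzTerm k j (i + 1) r
      + ((r : ℤ) + 1) * ((r : ℤ) + j + 1) * saalschutzTerm k j (i + 1) (r + 1)
      = ((k : ℤ) - i) * ((k : ℤ) + i + 1) * saalschutzTerm k j i r := by
  obtain ⟨m, rfl⟩ : ∃ m, i = m + r := ⟨i - r, by omega⟩
  simp only [saalschutzTerm, ← add_assoc]
  rw [show m + r + 1 - r = m + 1 by omega, show m + r + 1 - (r + 1) = m by omega,
    Nat.add_sub_cancel]
  have e1 := natCast_succ_mul_choose_succ j m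
  have e2 := natCast_succ_mul_choose_succ_succ (k + j + r) r
  have e3 := natCast_succ_mul_choose_succ k (j + r)
  push_cast at e1 e2 e3 ⊢
  linear_combination ((m : ℤ) + 2 * r + j + 1) * ((k + j + r).choose r * k.choose (j + r)) * e1
    + ((r : ℤ) + j + 1) * (j.choose m * k.choose (j + r + 1)) * e2
    + ((k : ℤ) + j + r + 1) * (j.choose m * (k + j + r).choose r) * e3

theorem sum_saalschutzTerm_recurrence (i : ℕ) :
    ((i : ℤ) + 1) * ((i : ℤ) + j + 1)
        * ∑ r ∈ range (i + 2), (saalschutzTerm k j (i + 1) r : ℤ)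
      = ((k : ℤ) - i) * ((k : ℤ) + i + 1)
        * ∑ r ∈ range (i + 1), (saalschutzTerm k j i r : ℤ) := by
  set T : ℕ → ℤ := fun r => saalschutzTerm k j (i + 1) r
  -- the certificate's weights `(i+1-r)(i+j+r+1)` and `r(r+j)` add up to `(i+1)(i+j+1)`
  calc ((i : ℤ) + 1) * ((i : ℤ) + j + 1) * ∑ r ∈ range (i + 2), T r
      = ∑ r ∈ range (i + 2), ((i : ℤ) + 1 - r) * ((i : ℤ) + j + r + 1) * T r
          + ∑ r ∈ range (i + 2), (r : ℤ) * (r + j) * T r := by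
        rw [← sum_add_distrib, mul_sum]
        exact sum_congr rfl fun r _ => by ring
    _ = ∑ r ∈ range (i + 1), ((i : ℤ) + 1 - r) * ((i : ℤ) + j + r + 1) * T r
          + ∑ r ∈ range (i + 1), ((r : ℤ) + 1) * ((r : ℤ) + j + 1) * T (r + 1) := by
        rw [sum_range_succ _ (i + 1), sum_range_succ' _ (i + 1)]
        simp only [Nat.cast_add, Nat.cast_one, Nat.cast_zero, sub_self, zero_mul, add_zero]
        exact congrArg _ (sum_congr rfl fun r _ => by ring)
    _ = ((k : ℤ) - i) * ((k : ℤ) + i + 1)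
          * ∑ r ∈ range (i + 1), (saalschutzTerm k j i r : ℤ) := by
        rw [← sum_add_distrib, mul_sum]
        exact sum_congr rfl fun r hr =>
          saalschutzTerm_certificate k j (Nat.lt_succ_iff.mp (mem_range.mp hr))

theorem choose_mul_add_choose_recurrence (i : ℕ) :
    ((i : ℤ) + 1) * ((i : ℤ) + j + 1) * (k.choose (i + 1) * (k + (i + 1)).choose (i + 1 + j))
      = ((k : ℤ) - i) * ((k : ℤ) + i + 1) * (k.choose i * (k + i).choose (i + j)) := by
  have e1 := natCast_succ_mul_choose_succ k i
  have e2 := natCast_succ_mul_choose_succ_succ (k + i) (i + j)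
  rw [← add_assoc, Nat.add_right_comm i 1 j]
  push_cast at e1 e2 ⊢
  linear_combination ((i : ℤ) + j + 1) * ((k + i + 1).choose (i + j + 1) : ℤ) * e1
    + ((k : ℤ) - i) * (k.choose i : ℤ) * e2

theorem sum_saalschutzTerm (i : ℕ) :
    ∑ r ∈ range (i + 1), saalschutzTerm k j i r = k.choose i * (k + i).choose (i + j) := by
  have key := eq_of_mul_succ_eq_mul (a := fun i : ℕ => ((i : ℤ) + 1) * ((i : ℤ) + j + 1))
    (f := fun i => ∑ r ∈ range (i + 1), (saalschutzTerm k j i r : ℤ))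
    (g := fun i => (k.choose i * (k + i).choose (i + j) : ℤ))
    (fun i => by positivity) (sum_saalschutzTerm_recurrence k j)
    (choose_mul_add_choose_recurrence k j) (by simp [saalschutzTerm])
  exact_mod_cast congrFun key i

end Saalschutz

theorem choose_prod_eq_sum_r (i j k : ℕ) :
    k.choose i * (k + i).choose i * k.choose j * (k + j).choose j
      = ∑ r ∈ Finset.range (i + 1),
          (i + j).choose i * j.choose (i - r) * (j + r).choose r
            * k.choose (j + r) * (k + j + r).choose (j + r) := by
  have summand (r : ℕ) :
      (i + j).choose i * j.choose (i - r) * (j + r).choose r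
          * k.choose (j + r) * (k + j + r).choose (j + r)
        = (i + j).choose i * (k + j).choose j * saalschutzTerm k j i r := by
    calc _ = (i + j).choose i * j.choose (i - r) * k.choose (j + r)
            * ((k + j + r).choose (j + r) * (j + r).choose r) := by ring
      _ = _ := by rw [choose_add_mul_choose_add, saalschutzTerm]; ring
  have trinomial : (k + i).choose (i + j) * (i + j).choose i = (k + i).choose i * k.choose j := by
    rw [add_comm i j, choose_add_mul_choose_add]
  rw [sum_congr rfl fun r _ => summand r, ← mul_sum, sum_saalschutzTerm]
  linear_combination (k.choose i * (k + j).choose j) * trinomial.symm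
end

section
/- For all nonnegative integers i, j, k, the product C(k,i)·C(k+i,i)·C(k,j)·C(k+j,j) equals ∑_{s=max(i,j)}^{i+j} C(s,i)·C(s,j)·C(i+j,s)·C(k,s)·C(k+s,s). -/
/-!
Two trinomial revisions, `C(i+j,s) C(s,i) = C(i+j,i) C(j,s-i)` and
`C(k,s) C(s,j) = C(k,j) C(k-j,s-j)`, turn the right-hand side (for `j ≤ i ≤ k`) into
`C(i+j,i) C(k,j)` times a balanced terminating `₃F₂` sum. The Pfaff–Saalschütz identity evaluates
that sum as `C(k+i,i) C(k+j,i+j)`, and a third trinomial revision gives the left-hand side.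
Pfaff–Saalschütz itself reduces to Vandermonde's identity: expand the binomial with the moving
upper index by Vandermonde, exchange the two sums, and sum twice more by Vandermonde.
-/

open Finset

namespace Nat

theorem sum_range_choose_mul_choose_add (p q r : ℕ) :
    ∑ w ∈ range (p + 1), p.choose w * q.choose (r + w) = (p + q).choose (p + r) := by
  induction p generalizing r with
  | zero => simp
  | succ p ih =>
    have hshift : ∑ w ∈ range (p + 1), p.choose (w + 1) * q.choose (r + (w + 1)) + q.choose r
        = (p + q).choose (p + r) := by
      rw [← ih, sum_range_succ, choose_succ_self, zero_mul, add_zero]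
      simpa using (sum_range_succ' (fun w => p.choose w * q.choose (r + w)) p).symm
    have hpascal : (p + 1 + q).choose (p + 1 + r)
        = (p + q).choose (p + (r + 1)) + (p + q).choose (p + r) := by
      rw [show p + 1 + q = p + q + 1 by omega, show p + 1 + r = p + r + 1 by omega,
        choose_succ_succ', add_comm, add_assoc]
    rw [sum_range_succ', sum_congr rfl fun w _ => by rw [choose_succ_succ', add_mul],
      sum_add_distrib, choose_zero_right, one_mul, add_zero, add_assoc, hshift, hpascal,
      ← ih (r + 1)]
    simp only [add_assoc, add_comm 1]

theorem sum_range_choose_mul_choose_mul_choose_add (a l q r : ℕ) :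
    ∑ u ∈ range (a + 1), a.choose u * u.choose l * q.choose (r + u)
      = a.choose l * (a - l + q).choose (a + r) := by
  obtain hal | hla := lt_or_ge a l
  · rw [choose_eq_zero_of_lt hal, zero_mul]
    refine sum_eq_zero fun u hu => ?_
    rw [choose_eq_zero_of_lt (show u < l by grind), mul_zero, zero_mul]
  obtain ⟨e, rfl⟩ := exists_add_of_le hla
  rw [add_assoc, sum_range_add, sum_eq_zero fun u hu => by
    rw [choose_eq_zero_of_lt (mem_range.mp hu), mul_zero, zero_mul], zero_add]
  simp_rw [choose_mul (le_add_right l _), add_tsub_cancel_left, mul_assoc, ← mul_sum,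
    ← add_assoc r, add_comm r l, sum_range_choose_mul_choose_add]
  congr 2
  omega

theorem add_choose_eq_sum_range (u x k N : ℕ) (hu : u ≤ N) (hN : N ≤ k) :
    (u + x).choose k = ∑ l ∈ range (N + 1), u.choose l * x.choose (k - l) := by
  rw [add_choose_eq, Finset.Nat.sum_antidiagonal_eq_sum_range_succ_mk]
  refine (sum_subset (range_subset_range.mpr (by omega)) fun l _ hl => ?_).symm
  rw [choose_eq_zero_of_lt (by simp at hl; omega), zero_mul]

theorem sum_range_choose_sub_mul_choose_mul_choose (a d n β : ℕ) :
    ∑ l ∈ range (a + 1),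
        (a + d + β).choose (a + d + n - l) * (a.choose l * (a - l + (d + n)).choose (a + d))
      = (a + d + β).choose (a + d) * (a + β).choose n := by
  have hrev : ∀ l ≤ min a n,
      (a + d + β).choose (a + d + n - l) * (a.choose l * (a - l + (d + n)).choose (a + d))
        = (a + d + β).choose (a + d) * (a.choose l * β.choose (n - l)) := by
    intro l hl
    have key := choose_mul (n := a + d + β) (k := a + d + n - l) (s := a + d) (by omega)
    rw [show a + d + β - (a + d) = β by omega, show a + d + n - l - (a + d) = n - l by omega]
      at key
    rw [show a - l + (d + n) = a + d + n - l by omega, mul_left_comm, key]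
    ring
  rw [add_choose_eq a β n, Finset.Nat.sum_antidiagonal_eq_sum_range_succ_mk, mul_sum]
  -- Only `l ≤ min a n` contributes; beyond it the truncated `n - l` would make `hrev` false.
  calc _ = ∑ l ∈ range (min a n + 1),
          (a + d + β).choose (a + d + n - l) * (a.choose l * (a - l + (d + n)).choose (a + d)) := by
        refine (sum_subset (range_subset_range.mpr (by omega)) fun l hl hl' => ?_).symm
        simp only [mem_range] at hl hl'
        rw [choose_eq_zero_of_lt (n := a - l + (d + n)) (by omega), mul_zero, mul_zero]
    _ = ∑ l ∈ range (min a n + 1), (a + d + β).choose (a + d) * (a.choose l * β.choose (n - l)) :=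
        sum_congr rfl fun l hl => hrev l (by simpa [Nat.lt_succ_iff] using hl)
    _ = _ := by
        refine sum_subset (range_subset_range.mpr (by omega)) fun l hl hl' => ?_
        simp only [mem_range] at hl hl'
        rw [choose_eq_zero_of_lt (n := a) (by omega), zero_mul, mul_zero]

/-- The factor `C(d+n, d+u)` is the usual `C(d+n, n-u)` written without truncated subtraction,
so that no term takes a junk value. -/
theorem pfaff_saalschutz (a d n β : ℕ) :
    ∑ u ∈ range (a + 1),
        a.choose u * (d + n).choose (d + u) * (a + d + β + u).choose (a + d + n)
      = (a + d + β).choose (a + d) * (a + β).choose n := by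
  calc _ = ∑ u ∈ range (a + 1), a.choose u * (d + n).choose (d + u) *
          ∑ l ∈ range (a + 1), u.choose l * (a + d + β).choose (a + d + n - l) := by
        refine sum_congr rfl fun u hu => ?_
        rw [show a + d + β + u = u + (a + d + β) by ring,
          add_choose_eq_sum_range u (a + d + β) (a + d + n) a
            (by simpa [Nat.lt_succ_iff] using hu) (by omega)]
    _ = ∑ l ∈ range (a + 1), (a + d + β).choose (a + d + n - l) *
          ∑ u ∈ range (a + 1), a.choose u * u.choose l * (d + n).choose (d + u) := by
        simp_rw [mul_sum]
        rw [sum_comm]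
        exact sum_congr rfl fun l _ => sum_congr rfl fun u _ => by ring
    _ = _ := by
        simp_rw [sum_range_choose_mul_choose_mul_choose_add]
        exact sum_range_choose_sub_mul_choose_mul_choose a d n β

end Nat

open Nat in
theorem choose_prod_eq_sum_of_le {i j k : ℕ} (hji : j ≤ i) :
    k.choose i * (k + i).choose i * k.choose j * (k + j).choose j
      = ∑ s ∈ Finset.Icc (max i j) (i + j),
          s.choose i * s.choose j * (i + j).choose s * k.choose s * (k + s).choose s := by
  rw [max_eq_left hji, ← Ico_add_one_right_eq_Icc, sum_Ico_eq_sum_range,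
    show i + j + 1 - i = j + 1 by omega]
  obtain hki | hik := lt_or_ge k i
  · rw [choose_eq_zero_of_lt hki, zero_mul, zero_mul, zero_mul]
    refine (sum_eq_zero fun u _ => ?_).symm
    rw [choose_eq_zero_of_lt (n := k) (by omega), mul_zero, zero_mul]
  obtain ⟨d, hd⟩ := exists_add_of_le hji
  obtain ⟨n, hn⟩ := exists_add_of_le hik
  have hterm (u : ℕ) : (i + u).choose i * (i + u).choose j * (i + j).choose (i + u) *
      k.choose (i + u) * (k + (i + u)).choose (i + u)
        = (i + j).choose i * k.choose j *
          (j.choose u * (d + n).choose (d + u) * (i + k + u).choose k) := by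
    have h₁ : (i + j).choose (i + u) * (i + u).choose i = (i + j).choose i * j.choose u := by
      rw [choose_mul (le_add_right _ _), add_tsub_cancel_left, add_tsub_cancel_left]
    have h₂ : k.choose (i + u) * (i + u).choose j = k.choose j * (d + n).choose (d + u) := by
      rw [choose_mul (by omega), show k - j = d + n by omega, show i + u - j = d + u by omega]
    calc _ = (i + j).choose (i + u) * (i + u).choose i * (k.choose (i + u) * (i + u).choose j) *
          (k + (i + u)).choose (i + u) := by ring
      _ = _ := by
        rw [h₁, h₂, show k + (i + u) = i + u + k by omega, choose_symm_add (a := i + u),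
          add_right_comm]
        ring
  have hsaal := pfaff_saalschutz j d n k
  rw [← hd, hn.symm] at hsaal
  have hrev : (k + j).choose (i + j) * (i + j).choose j = (k + j).choose j * k.choose i := by
    rw [choose_mul (le_add_left _ _), add_tsub_cancel_right, add_tsub_cancel_right]
  rw [sum_congr rfl fun u _ => hterm u, ← mul_sum, hsaal, add_comm j k,
    choose_symm_of_eq_add (show k + j = n + (i + j) by omega), choose_symm_add, add_comm k i]
  calc _ = k.choose j * (i + k).choose i * ((k + j).choose j * k.choose i) := by ring
    _ = _ := by rw [← hrev]; ring

theorem choose_prod_eq_sum_s (i j k : ℕ) :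
    k.choose i * (k + i).choose i * k.choose j * (k + j).choose j
      = ∑ s ∈ Finset.Icc (max i j) (i + j),
          s.choose i * s.choose j * (i + j).choose s * k.choose s * (k + s).choose s := by
  rcases le_total j i with hji | hij
  · exact choose_prod_eq_sum_of_le hji
  · rw [max_comm, add_comm i j]
    calc _ = k.choose j * (k + j).choose j * k.choose i * (k + i).choose i := by ring
      _ = _ := (choose_prod_eq_sum_of_le hij).trans (sum_congr rfl fun s _ => by ring)
end

section
/- For all nonnegative integers s and all positive integers n, the identity ∑_{k=s}^{n−1} C(k,s)·C(k+s,s) = (n/(2s+1))·C(n+s,s)·C(n−1,s) holds. -/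
/-!
With `F N = N * C(N + s, s) * C(N - 1, s)`, Pascal-type recurrences for both factors give
`F (N + 1) - F N = (2s + 1) * C(N, s) * C(N + s, s)`, so the sum telescopes. Terms with `k < s`
vanish, so the sum over `[s, n - 1]` is the sum over `range n`.
-/

open Finset

namespace Nat

variable {R : Type*} [CommRing R]

theorem cast_choose_mul_succ (n k : ℕ) :
    (n.choose k : R) * (n + 1) = (n + 1).choose k * (n + 1 - k) := by
  rcases le_or_gt k (n + 1) with hk | hk
  · have h := congrArg (Nat.cast : ℕ → R) (choose_mul_succ_eq n k)
    push_cast [Nat.cast_sub hk] at h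
    exact h
  · simp [choose_eq_zero_of_lt hk, choose_eq_zero_of_lt (show n < k by omega)]

theorem cast_mul_choose_pred (n k : ℕ) :
    (n : R) * (n - 1).choose k = n.choose k * (n - k) := by
  cases n with
  | zero => cases k <;> simp
  | succ m =>
    push_cast
    rw [mul_comm]
    exact cast_choose_mul_succ m k

theorem sum_range_choose_mul_add_choose_mul (s N : ℕ) :
    ∑ k ∈ range N, (k.choose s : R) * (k + s).choose s * (2 * s + 1)
      = N * (N + s).choose s * (N - 1).choose s := by
  refine sum_range_induction _ (fun N ↦ (N : R) * (N + s).choose s * (N - 1).choose s)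
    (by simp) N fun N _ ↦ ?_
  have h₁ := cast_choose_mul_succ (R := R) (N + s) s
  have h₂ := cast_mul_choose_pred (R := R) N s
  rw [show N + s + 1 = N + 1 + s by omega] at h₁
  push_cast at h₁ ⊢
  linear_combination -(N.choose s : R) * h₁ - ((N + s).choose s : R) * h₂

end Nat

theorem sum_choose_mul_choose_eq (s n : ℕ) (hn : 0 < n) :
    (∑ k ∈ Finset.Icc s (n - 1), (k.choose s : ℚ) * ((k + s).choose s : ℚ))
      = (n : ℚ) / (2 * s + 1) * ((n + s).choose s : ℚ) * ((n - 1).choose s : ℚ) := by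
  have hsum : ∑ k ∈ Icc s (n - 1), (k.choose s : ℚ) * (k + s).choose s
      = ∑ k ∈ range n, (k.choose s : ℚ) * (k + s).choose s := by
    refine sum_subset (fun k hk ↦ by simp only [mem_Icc, mem_range] at hk ⊢; omega) fun k hkn hk ↦ ?_
    simp only [mem_Icc, mem_range] at hkn hk
    simp [Nat.choose_eq_zero_of_lt (show k < s by omega)]
  rw [hsum, div_mul_eq_mul_div, div_mul_eq_mul_div, eq_div_iff (by positivity), sum_mul]
  exact Nat.sum_range_choose_mul_add_choose_mul s n
end

section
/- For every nonnegative integer m, the identity ∑_{s=0}^{m} C(2s,s)·C(s,m−s)·(−1)^s/(s+1) = (−1)^m holds. -/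
/-!
The sum is the `m`-th coefficient of `A = C(-X(1 + X))`, where `C(t) = ∑ catalan s * t ^ s`
satisfies `C = 1 + t C²`. Hence `u = (1 + X) A` satisfies `u = 1 + X - X u²`, i.e.
`(u - 1)(1 + X(u + 1)) = 0`; the second factor is a unit, so `u = 1` and `A = 1 / (1 + X)`.
-/

open Finset

namespace PowerSeries

variable {R : Type*} [CommRing R]

theorem coeff_one_add_X_pow (d n : ℕ) : coeff n ((1 + X : R⟦X⟧) ^ d) = d.choose n := by
  have : (1 + X : R⟦X⟧) ^ d = ((1 + Polynomial.X : Polynomial R) ^ d : Polynomial R) := by simp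
  rw [this, Polynomial.coeff_coe, Polynomial.coeff_one_add_X_pow]

theorem coeff_neg_X_mul_one_add_X_pow (d n : ℕ) :
    coeff n ((-(X * (1 + X))) ^ d : R⟦X⟧) =
      if d ≤ n then (-1) ^ d * (d.choose (n - d) : R) else 0 := by
  have hsign : ((-1) ^ d : R⟦X⟧) = C ((-1) ^ d) := by simp
  rw [neg_pow, mul_pow, ← mul_assoc, mul_comm _ (X ^ d), mul_assoc, coeff_X_pow_mul', hsign,
    coeff_C_mul, coeff_one_add_X_pow]

theorem coeff_subst_catalanSeries_neg_X_mul_one_add_X (n : ℕ) :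
    coeff n ((catalanSeries.map (Nat.castRingHom R)).subst (-(X * (1 + X)) : R⟦X⟧)) =
      ∑ d ∈ range (n + 1), (catalan d : R) * (-1) ^ d * d.choose (n - d) := by
  have hb : HasSubst (-(X * (1 + X)) : R⟦X⟧) := HasSubst.of_constantCoeff_zero' (by simp)
  rw [coeff_subst' hb, finsum_eq_sum_of_support_subset (s := range (n + 1))]
  · refine sum_congr rfl fun d hd => ?_
    rw [coeff_neg_X_mul_one_add_X_pow, if_pos (Nat.lt_succ_iff.mp (mem_range.mp hd))]
    simp [mul_assoc]
  · refine fun d hd => mem_range.mpr (Nat.lt_succ_of_le ?_)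
    by_contra h
    simp [coeff_neg_X_mul_one_add_X_pow, h] at hd

theorem subst_catalanSeries_eq_one_add_mul_sq {b : R⟦X⟧} (hb : HasSubst b) :
    (catalanSeries.map (Nat.castRingHom R)).subst b =
      1 + b * (catalanSeries.map (Nat.castRingHom R)).subst b ^ 2 := by
  conv_lhs => rw [← catalanSeries_sq_mul_X_add_one]
  rw [← coe_substAlgHom hb, map_add, map_mul, map_pow, map_X, map_one, map_add, map_mul, map_pow,
    map_one, substAlgHom_X]
  ring

theorem one_add_X_mul_subst_catalanSeries_neg_X_mul_one_add_X :
    (1 + X) * (catalanSeries.map (Nat.castRingHom R)).subst (-(X * (1 + X)) : R⟦X⟧) = 1 := by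
  set u := (1 + X) * (catalanSeries.map (Nat.castRingHom R)).subst (-(X * (1 + X)) : R⟦X⟧)
  have hA := subst_catalanSeries_eq_one_add_mul_sq
    (HasSubst.of_constantCoeff_zero' (a := (-(X * (1 + X)) : R⟦X⟧)) (by simp))
  have hfactor : (u - 1) * (1 + X * (u + 1)) = 0 := by linear_combination (1 + X) * hA
  have hunit : IsUnit (1 + X * (u + 1)) := isUnit_iff_constantCoeff.mpr (by simp)
  exact sub_eq_zero.mp (hunit.mul_left_eq_zero.mp hfactor)

theorem coeff_eq_neg_one_pow_of_one_add_X_mul_eq_one {f : R⟦X⟧} (h : (1 + X) * f = 1) (n : ℕ) :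
    coeff n f = (-1) ^ n := by
  induction n with
  | zero => simpa using congr(constantCoeff $h)
  | succ n ih =>
    have hcoeff := congr(coeff (n + 1) $h)
    rw [add_mul, one_mul, map_add, coeff_succ_X_mul, ih, coeff_one, if_neg n.succ_ne_zero]
      at hcoeff
    linear_combination hcoeff

end PowerSeries

theorem cast_catalan_eq_choose_div {K : Type*} [Field K] [CharZero K] (n : ℕ) :
    (catalan n : K) = (2 * n).choose n / (n + 1) := by
  rw [← Nat.centralBinom_eq_two_mul_choose, ← succ_mul_catalan_eq_centralBinom]
  push_cast
  field_simp

theorem sum_centralBinom_alternating (m : ℕ) :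
    ∑ s ∈ Finset.range (m + 1),
        ((2 * s).choose s : ℚ) * (s.choose (m - s) : ℚ) * (-1) ^ s / (s + 1)
      = (-1 : ℚ) ^ m := by
  rw [← PowerSeries.coeff_eq_neg_one_pow_of_one_add_X_mul_eq_one
      PowerSeries.one_add_X_mul_subst_catalanSeries_neg_X_mul_one_add_X m,
    PowerSeries.coeff_subst_catalanSeries_neg_X_mul_one_add_X]
  refine sum_congr rfl fun s _ => ?_
  rw [cast_catalan_eq_choose_div]
  ring
end

section
/- For every nonnegative integer m, the identity ∑_{s=0}^{m} C(2s,s)·C(s,m−s)·((−1)^s/(s+1))·H^{(2)}_s = (2·(−1)^m/(m+1))·∑_{s=0}^{m} H^{(2)}_s holds. -/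
/-!
Creative telescoping. Zeilberger's algorithm produces a certificate `cert` with
`(m + 1)(m + 2) (summand m s + summand (m + 1) s) = cert m s - cert m (s + 1)`. Summing this
against `H2 s` by parts, using `H2 (s + 1) - H2 s = 1 / (s + 1) ^ 2`, turns the left side `S m`
into `(m + 1)(m + 2) (S m + S (m + 1)) = K m := ∑_{s ≥ 1} cert m s / s ^ 2`. A second relation of
`cert`, which telescopes in `s` after division by `s ^ 2`, gives the recurrence
`(m + 2) K m + (2m + 5) K (m + 1) + (m + 3) K (m + 2) = 0`, solved by
`K m = 2 (-1) ^ (m + 1) H_{m + 1}`. The right side obeys the same first-order relation because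
`∑_{s ≤ m} H2 s = (m + 1) H2 (m + 1) - H_{m + 1}`, and both sides vanish at `m = 0`.
-/

/-- The `n`-th generalized harmonic number of order 2, `H^{(2)}_n = ∑_{k=1}^n 1/k^2`. -/
def H2 (n : ℕ) : ℚ := ∑ k ∈ Finset.Icc 1 n, 1 / (k : ℚ) ^ 2

open Finset

theorem Nat.cast_succ_mul_choose_succ_right {R : Type*} [CommRing R] (n k : ℕ) :
    ((k : R) + 1) * n.choose (k + 1) = ((n : R) - k) * n.choose k := by
  rcases le_or_gt k n with h | h
  · have := congrArg (Nat.cast (R := R)) (Nat.choose_succ_right_eq n k)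
    push_cast [h] at this
    linear_combination this
  · simp [Nat.choose_eq_zero_of_lt h, Nat.choose_eq_zero_of_lt (h.trans (Nat.lt_succ_self k))]

theorem Nat.cast_sub_mul_choose_succ_left {R : Type*} [CommRing R] (n k : ℕ) :
    ((n : R) + 1 - k) * (n + 1).choose k = ((n : R) + 1) * n.choose k := by
  rcases le_or_gt k (n + 1) with h | h
  · have := congrArg (Nat.cast (R := R)) (Nat.choose_mul_succ_eq n k)
    push_cast [h] at this
    linear_combination -this
  · simp [Nat.choose_eq_zero_of_lt h, Nat.choose_eq_zero_of_lt (Nat.lt_of_succ_lt h)]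

theorem Nat.cast_succ_mul_centralBinom_succ {R : Type*} [CommSemiring R] (n : ℕ) :
    ((n : R) + 1) * centralBinom (n + 1) = 2 * (2 * n + 1) * centralBinom n := by
  have := congrArg (Nat.cast (R := R)) (Nat.succ_mul_centralBinom_succ n)
  push_cast at this
  exact this

theorem Finset.sum_range_sub_mul_by_parts {R : Type*} [CommRing R] (g F : ℕ → R) (n : ℕ) :
    ∑ i ∈ range n, (g (i + 1) - g i) * F i
      = g n * F n - g 0 * F 0 - ∑ i ∈ range n, g (i + 1) * (F (i + 1) - F i) := by
  rw [eq_sub_iff_add_eq, ← sum_add_distrib, ← sum_range_sub (fun i ↦ g i * F i)]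
  exact sum_congr rfl fun i _ ↦ by ring

theorem eq_of_add_succ_eq {G : Type*} [Add G] [IsLeftCancelAdd G] {f g : ℕ → G}
    (h₀ : f 0 = g 0) (h : ∀ n, f n + f (n + 1) = g n + g (n + 1)) : f = g := by
  funext n
  induction n with
  | zero => exact h₀
  | succ n ih => exact add_left_cancel (ih ▸ h n)

theorem H2_succ (n : ℕ) : H2 (n + 1) = H2 n + 1 / ((n : ℚ) + 1) ^ 2 := by
  rw [H2, H2, sum_Icc_succ_top (Nat.le_add_left 1 n)]
  push_cast
  rfl

theorem sum_range_H2 (m : ℕ) :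
    ∑ s ∈ range (m + 1), H2 s = (m + 1) * H2 (m + 1) - harmonic (m + 1) := by
  induction m with
  | zero => simp [H2]
  | succ m ih =>
    rw [sum_range_succ, ih, H2_succ (m + 1), harmonic_succ (m + 1)]
    push_cast
    field_simp
    ring

namespace CentralBinomH2

/-- The `if` matters: for `s > m` the truncated `m - s` is `0` and `s.choose 0 = 1`. -/
def summand (m s : ℕ) : ℚ :=
  if s ≤ m then Nat.centralBinom s * s.choose (m - s) * ((-1) ^ s / (s + 1)) else 0

def cert (m s : ℕ) : ℚ :=
  if s ≤ m + 1 then (2 * s - m - 1) * Nat.centralBinom s * s.choose (m + 1 - s) * (-1) ^ s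
  else 0

variable {m s k : ℕ}

theorem summand_of_eq_add (h : m = s + k) :
    summand m s = Nat.centralBinom s * s.choose k * ((-1) ^ s / (s + 1)) := by
  rw [summand, if_pos (by omega), show m - s = k by omega]

theorem summand_of_lt (h : m < s) : summand m s = 0 := if_neg (by omega)

theorem cert_of_succ_eq_add (h : m + 1 = s + k) :
    cert m s = ((s : ℚ) - k) * Nat.centralBinom s * s.choose k * (-1) ^ s := by
  have hq : (m : ℚ) + 1 = s + k := by exact_mod_cast h
  rw [cert, if_pos (by omega), show m + 1 - s = k by omega]
  linear_combination (-(Nat.centralBinom s : ℚ) * s.choose k * (-1) ^ s) * hq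

theorem cert_of_succ_lt (h : m + 1 < s) : cert m s = 0 := if_neg (by omega)

theorem summand_add_summand_succ (m s : ℕ) :
    ((m : ℚ) + 1) * (m + 2) * (summand m s + summand (m + 1) s) = cert m s - cert m (s + 1) := by
  rcases le_or_gt s m with h | h
  · obtain ⟨k, rfl⟩ := Nat.exists_eq_add_of_le h
    rw [summand_of_eq_add rfl, summand_of_eq_add (k := k + 1) (by ring),
      cert_of_succ_eq_add (k := k + 1) (by ring), cert_of_succ_eq_add (k := k) (by ring)]
    have hc := Nat.cast_succ_mul_centralBinom_succ (R := ℚ) s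
    have hl := Nat.cast_sub_mul_choose_succ_left (R := ℚ) s k
    have hr := Nat.cast_succ_mul_choose_succ_right (R := ℚ) s k
    field_simp
    push_cast
    rw [pow_succ]
    linear_combination (-(-1 : ℚ) ^ s) * (((s : ℚ) - k + 1) * (s + 1).choose k * hc
      + 2 * (2 * (s : ℚ) + 1) * Nat.centralBinom s * hl
      - (3 * (s : ℚ) + k + 3) * Nat.centralBinom s * hr)
  obtain rfl | h : s = m + 1 ∨ m + 1 < s := by omega
  · rw [summand_of_lt (Nat.lt_succ_self m), summand_of_eq_add (k := 0) rfl,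
      cert_of_succ_eq_add (k := 0) rfl, cert_of_succ_lt (by omega)]
    push_cast
    field_simp
    ring
  · rw [summand_of_lt (by omega), summand_of_lt (by omega), cert_of_succ_lt h,
      cert_of_succ_lt (by omega)]
    ring

theorem cert_recurrence (m s : ℕ) :
    ((m : ℚ) + 3) * ((m + 2) * cert m s + (2 * m + 5) * cert (m + 1) s + (m + 3) * cert (m + 2) s)
      = s ^ 2 * (cert (m + 2) s - cert (m + 2) (s + 1)) := by
  rcases le_or_gt s (m + 1) with h | h
  · obtain ⟨k, hk⟩ := Nat.exists_eq_add_of_le h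
    have hm : (m : ℚ) = s + k - 1 := by
      have : (m : ℚ) + 1 = s + k := by exact_mod_cast hk
      linear_combination this
    rw [cert_of_succ_eq_add hk, cert_of_succ_eq_add (k := k + 1) (by omega),
      cert_of_succ_eq_add (k := k + 2) (by omega), cert_of_succ_eq_add (k := k + 1) (by omega), hm]
    have hc := Nat.cast_succ_mul_centralBinom_succ (R := ℚ) s
    have hl := Nat.cast_sub_mul_choose_succ_left (R := ℚ) s (k + 1)
    have hr := Nat.cast_succ_mul_choose_succ_right (R := ℚ) s k
    have hr' := Nat.cast_succ_mul_choose_succ_right (R := ℚ) s (k + 1)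
    push_cast at hl hr' ⊢
    rw [pow_succ]
    linear_combination (-1 : ℚ) ^ s * (-(s : ℚ) ^ 2 * s.choose (k + 1) * hc
      - (s : ℚ) ^ 2 * Nat.centralBinom (s + 1) * hl
      - ((s : ℚ) + k + 2) * (s + k + 1) * Nat.centralBinom s * hr
      + (2 * (s : ℚ) + k + 2) * (s - k - 2) * Nat.centralBinom s * hr')
  obtain rfl | rfl | h : s = m + 2 ∨ s = m + 3 ∨ m + 3 < s := by omega
  · rw [cert_of_succ_lt (by omega), cert_of_succ_eq_add (k := 0) (by omega),
      cert_of_succ_eq_add (k := 1) (by omega), cert_of_succ_eq_add (k := 0) (by omega)]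
    have hc := Nat.cast_succ_mul_centralBinom_succ (R := ℚ) (m + 2)
    simp only [Nat.choose_zero_right, Nat.choose_one_right]
    push_cast at hc ⊢
    rw [pow_succ]
    linear_combination (-((m : ℚ) + 2) ^ 2 * (-1) ^ (m + 2)) * hc
  · rw [cert_of_succ_lt (by omega), cert_of_succ_lt (by omega),
      cert_of_succ_eq_add (k := 0) (by omega), cert_of_succ_lt (by omega)]
    push_cast
    ring
  · rw [cert_of_succ_lt (by omega), cert_of_succ_lt (by omega), cert_of_succ_lt (by omega),
      cert_of_succ_lt (by omega)]
    ring

def certSum (m : ℕ) : ℚ := ∑ s ∈ range (m + 2), cert m (s + 1) / ((s : ℚ) + 1) ^ 2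

theorem certSum_eq_sum_range {N : ℕ} (h : m + 2 ≤ N) :
    certSum m = ∑ s ∈ range N, cert m (s + 1) / ((s : ℚ) + 1) ^ 2 := by
  refine sum_subset (range_subset_range.2 h) fun s _ hs ↦ ?_
  rw [cert_of_succ_lt (by simp at hs; omega), zero_div]

theorem certSum_recurrence (m : ℕ) :
    ((m : ℚ) + 2) * certSum m + (2 * m + 5) * certSum (m + 1) + (m + 3) * certSum (m + 2)
      = 0 := by
  refine (mul_eq_zero.1 ?_).resolve_left (by positivity : (m : ℚ) + 3 ≠ 0)
  rw [certSum_eq_sum_range (N := m + 4) (by omega), certSum_eq_sum_range (N := m + 4) (by omega),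
    certSum_eq_sum_range (N := m + 4) (by omega), mul_sum, mul_sum, mul_sum, ← sum_add_distrib,
    ← sum_add_distrib, mul_sum]
  have hterm : ∀ s ∈ range (m + 4),
      ((m : ℚ) + 3) * ((m + 2) * (cert m (s + 1) / ((s : ℚ) + 1) ^ 2)
        + (2 * m + 5) * (cert (m + 1) (s + 1) / ((s : ℚ) + 1) ^ 2)
        + (m + 3) * (cert (m + 2) (s + 1) / ((s : ℚ) + 1) ^ 2))
      = cert (m + 2) (s + 1) - cert (m + 2) (s + 1 + 1) := fun s _ ↦ by
    have := cert_recurrence m (s + 1)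
    push_cast at this
    field_simp
    linear_combination this
  rw [sum_congr rfl hterm, sum_range_sub' (fun s ↦ cert (m + 2) (s + 1)),
    cert_of_succ_lt (m := m + 2) (s := m + 4 + 1) (by omega),
    cert_of_succ_eq_add (m := m + 2) (s := 0 + 1) (k := m + 2) (by omega),
    Nat.choose_eq_zero_of_lt (by omega)]
  simp

theorem certSum_eq (m : ℕ) : certSum m = 2 * (-1) ^ (m + 1) * harmonic (m + 1) := by
  induction m using Nat.twoStepInduction with
  | zero => norm_num [certSum, cert, sum_range_succ, Nat.centralBinom, Nat.choose]
  | one => norm_num [certSum, cert, sum_range_succ, harmonic, Nat.centralBinom, Nat.choose]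
  | more n ih₀ ih₁ =>
    have h := certSum_recurrence n
    rw [ih₀, ih₁, harmonic_succ (n + 1)] at h
    rw [harmonic_succ (n + 2), harmonic_succ (n + 1)]
    have : (n : ℚ) + 3 ≠ 0 := by positivity
    push_cast at h ⊢
    field_simp at h ⊢
    linear_combination h

def weightedSum (m : ℕ) : ℚ := ∑ s ∈ range (m + 1), summand m s * H2 s

def closedForm (m : ℕ) : ℚ := 2 * (-1) ^ m / (m + 1) * ∑ s ∈ range (m + 1), H2 s

theorem weightedSum_add_succ (m : ℕ) :
    ((m : ℚ) + 1) * (m + 2) * (weightedSum m + weightedSum (m + 1)) = certSum m := by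
  have hext : weightedSum m = ∑ s ∈ range (m + 2), summand m s * H2 s := by
    rw [sum_range_succ, summand_of_lt (Nat.lt_succ_self m), zero_mul, add_zero, weightedSum]
  rw [hext, weightedSum, ← sum_add_distrib, mul_sum]
  calc ∑ s ∈ range (m + 2),
        ((m : ℚ) + 1) * (m + 2) * (summand m s * H2 s + summand (m + 1) s * H2 s)
      = -∑ s ∈ range (m + 2), (cert m (s + 1) - cert m s) * H2 s := by
        rw [← sum_neg_distrib]
        refine sum_congr rfl fun s _ ↦ ?_
        linear_combination H2 s * summand_add_summand_succ m s
    _ = certSum m := by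
        rw [sum_range_sub_mul_by_parts, cert_of_succ_lt (m := m) (s := m + 2) (by omega)]
        simp only [H2_succ, add_sub_cancel_left, zero_mul, mul_one_div, certSum]
        simp [H2]

theorem closedForm_add_succ (m : ℕ) :
    ((m : ℚ) + 1) * (m + 2) * (closedForm m + closedForm (m + 1))
      = 2 * (-1) ^ (m + 1) * harmonic (m + 1) := by
  rw [closedForm, closedForm, sum_range_succ _ (m + 1), sum_range_H2]
  push_cast
  field_simp
  ring

theorem weightedSum_eq_closedForm : weightedSum = closedForm :=
  eq_of_add_succ_eq (by simp [weightedSum, closedForm, summand, H2]) fun m ↦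
    mul_left_cancel₀ (by positivity : ((m : ℚ) + 1) * (m + 2) ≠ 0) <| by
      rw [weightedSum_add_succ, closedForm_add_succ, certSum_eq]

end CentralBinomH2

theorem sum_centralBinom_H2 (m : ℕ) :
    ∑ s ∈ Finset.range (m + 1),
        ((2 * s).choose s : ℚ) * (s.choose (m - s) : ℚ) * ((-1) ^ s / (s + 1)) * H2 s
      = 2 * (-1 : ℚ) ^ m / (m + 1) * ∑ s ∈ Finset.range (m + 1), H2 s := by
  refine Eq.trans (sum_congr rfl fun s hs ↦ ?_) (congrFun CentralBinomH2.weightedSum_eq_closedForm m)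
  rw [CentralBinomH2.summand_of_eq_add (k := m - s) (by simp at hs; omega)]
  rfl
end

section
/- Let p > 3 be a prime and let m be an integer with 0 ≤ m ≤ p−2. Then ∑_{s=0}^{m} H^{(2)}_s ≡ ∑_{s=0}^{p−m−2} H^{(2)}_s (mod p), as a congruence of rational numbers. -/
open Finset

section Reflection

variable {A : Type*} [AddCommGroup A]

lemma sum_Icc_tsub_eq_neg_sum_Icc (g : ℕ → A) {N : ℕ} (hg : ∀ k ∈ Icc 1 N, g (N + 1 - k) = g k)
    (htotal : ∑ k ∈ Icc 1 N, g k = 0) {s : ℕ} (hs : s ≤ N) :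
    ∑ k ∈ Icc 1 (N - s), g k = -∑ k ∈ Icc 1 s, g k := by
  induction s with
  | zero => simpa using htotal
  | succ s ih =>
    have hsplit : ∑ k ∈ Icc 1 (N - s), g k = ∑ k ∈ Icc 1 (N - (s + 1)), g k + g (s + 1) := by
      rw [show N - s = N - (s + 1) + 1 by omega, sum_Icc_succ_top (by omega),
        show N - (s + 1) + 1 = N + 1 - (s + 1) by omega, hg _ (mem_Icc.mpr ⟨by omega, by omega⟩)]
    rw [sum_Icc_succ_top (by omega), neg_add, ← ih (by omega), hsplit, add_neg_cancel_right]

lemma sum_range_sub_sum_range_tsub_of_antisymm (H : ℕ → A) {N m : ℕ}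
    (hH : ∀ s ≤ N, H (N - s) = -H s) (hm : m ≤ N) :
    ∑ s ∈ range (m + 1), H s - ∑ s ∈ range (N - m), H s = ∑ s ∈ range (N + 1), H s := by
  have htail : ∑ s ∈ Ico (m + 1) (N + 1), H s = -∑ s ∈ range (N - m), H s := by
    rw [sum_Ico_eq_sum_range, show N + 1 - (m + 1) = N - m by omega, ← sum_range_reflect,
      ← sum_neg_distrib]
    refine sum_congr rfl fun j hj => ?_
    rw [mem_range] at hj
    rw [← hH _ (by omega)]
    congr 1
    omega
  rw [← sum_range_add_sum_Ico _ (by omega : m + 1 ≤ N + 1), htail, sub_eq_add_neg]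

lemma sum_range_eq_zero_of_antisymm {R : Type*} [NonAssocRing R] [Nontrivial R] [NoZeroDivisors R]
    (hR : ringChar R ≠ 2) (H : ℕ → R) {N : ℕ} (hH : ∀ s ≤ N, H (N - s) = -H s) :
    ∑ s ∈ range (N + 1), H s = 0 := by
  refine (Ring.eq_self_iff_eq_zero_of_char_ne_two hR).mp ?_
  rw [← sum_neg_distrib]
  conv_rhs => rw [← sum_range_reflect]
  refine sum_congr rfl fun s hs => ?_
  rw [Nat.add_sub_cancel, hH s (Nat.lt_succ_iff.mp (mem_range.mp hs))]

end Reflection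

namespace ZMod

variable {p : ℕ} [Fact p.Prime]

lemma sum_Icc_one_natCast_eq_sum_univ {M : Type*} [AddCommMonoid M] (f : ZMod p → M)
    (hf : f 0 = 0) : ∑ k ∈ Icc 1 (p - 1), f k = ∑ x, f x := by
  have hrange : ∑ k ∈ range p, f k = ∑ x, f x :=
    sum_nbij' (↑) val (by simp) (fun x _ => mem_range.mpr x.val_lt)
      (fun k hk => val_cast_of_lt (mem_range.mp hk)) (fun x _ => natCast_zmod_val x)
      (fun _ _ => rfl)
  rw [← hrange]
  refine sum_subset (fun k hk => ?_) (fun k hk hk' => ?_)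
  · simp only [mem_Icc, mem_range] at hk ⊢
    omega
  · simp only [mem_Icc, mem_range] at hk hk'
    rw [show k = 0 by omega, Nat.cast_zero, hf]

lemma sum_Icc_one_inv_sq_eq_zero (hp : 3 < p) : ∑ k ∈ Icc 1 (p - 1), ((k : ZMod p)⁻¹) ^ 2 = 0 :=
  calc ∑ k ∈ Icc 1 (p - 1), ((k : ZMod p)⁻¹) ^ 2 = ∑ x : ZMod p, x⁻¹ ^ 2 :=
        sum_Icc_one_natCast_eq_sum_univ (fun x => x⁻¹ ^ 2) (by simp)
    _ = ∑ x : ZMod p, x ^ 2 := Equiv.sum_comp (Equiv.inv _) (· ^ 2)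
    _ = 0 := FiniteField.sum_pow_lt_card_sub_one _ _ (by rw [card]; omega)

lemma sum_range_sum_Icc_inv_sq_reflect (hp : 3 < p) {m : ℕ} (hm : m ≤ p - 2) :
    ∑ s ∈ range (m + 1), ∑ k ∈ Icc 1 s, ((k : ZMod p)⁻¹) ^ 2 =
      ∑ s ∈ range (p - m - 2 + 1), ∑ k ∈ Icc 1 s, ((k : ZMod p)⁻¹) ^ 2 := by
  set H : ℕ → ZMod p := fun s => ∑ k ∈ Icc 1 s, ((k : ZMod p)⁻¹) ^ 2
  have hsymm : ∀ k ∈ Icc 1 (p - 1), ((p - 1 + 1 - k : ℕ) : ZMod p)⁻¹ ^ 2 = (k : ZMod p)⁻¹ ^ 2 := by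
    intro k hk
    rw [mem_Icc] at hk
    rw [Nat.cast_sub (by omega), Nat.sub_add_cancel (by omega), natCast_self, zero_sub, inv_neg,
      neg_sq]
  have hH : ∀ s ≤ p - 1, H (p - 1 - s) = -H s := fun s hs =>
    sum_Icc_tsub_eq_neg_sum_Icc _ hsymm (sum_Icc_one_inv_sq_eq_zero hp) hs
  have hchar : ringChar (ZMod p) ≠ 2 := by
    rw [ringChar_zmod_n]
    omega
  rw [show p - m - 2 + 1 = p - 1 - m by omega, ← sub_eq_zero,
    sum_range_sub_sum_range_tsub_of_antisymm H hH (by omega)]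
  exact sum_range_eq_zero_of_antisymm hchar H hH

end ZMod

namespace PadicInt

variable {p : ℕ} [Fact p.Prime]

lemma map_inv_natCast {K : Type*} [DivisionRing K] (f : ℤ_[p] →+* K) {k : ℕ} (hk : p.Coprime k) :
    f (k : ℤ_[p]).inv = (k : K)⁻¹ := by
  refine eq_inv_of_mul_eq_one_right ?_
  rw [← map_natCast f, ← map_mul, mul_inv (norm_natCast_eq_one_iff.mpr hk), map_one]

lemma norm_le_inv_of_toZMod_eq_zero {x : ℤ_[p]} (hx : toZMod x = 0) : ‖x‖ ≤ (p : ℝ) ^ (-1 : ℤ) := by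
  rw [norm_le_pow_iff_norm_lt_pow_add_one, neg_add_cancel, zpow_zero, ← mem_nonunits,
    ← IsLocalRing.mem_maximalIdeal, ← ker_toZMod]
  exact hx

lemma padicNorm_le_inv_of_toZMod_eq_zero {q : ℚ} {x : ℤ_[p]} (hxq : (x : ℚ_[p]) = q)
    (hx : toZMod x = 0) : padicNorm p q ≤ (p : ℚ) ^ (-1 : ℤ) := by
  have := norm_le_inv_of_toZMod_eq_zero hx
  rw [norm_def, hxq, Padic.eq_padicNorm] at this
  rw [← Rat.cast_le (K := ℝ)]
  push_cast
  exact this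

variable (p) in
/-- `PadicInt.inv` is `0` off the units, so this lifts `H2 n` only for `n < p`. -/
noncomputable def H2Int (n : ℕ) : ℤ_[p] := ∑ k ∈ Icc 1 n, (k : ℤ_[p]).inv ^ 2

lemma map_H2Int {K : Type*} [DivisionRing K] (f : ℤ_[p] →+* K) {n : ℕ} (hn : n < p) :
    f (H2Int p n) = ∑ k ∈ Icc 1 n, ((k : K)⁻¹) ^ 2 := by
  rw [H2Int, map_sum]
  refine sum_congr rfl fun k hk => ?_
  rw [mem_Icc] at hk
  rw [map_pow, map_inv_natCast f (Nat.coprime_of_lt_prime (by omega) (by omega) Fact.out)]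

lemma coe_H2Int {n : ℕ} (hn : n < p) : (H2Int p n : ℚ_[p]) = H2 n := by
  rw [show (H2Int p n : ℚ_[p]) = Coe.ringHom (H2Int p n) from rfl, map_H2Int _ hn]
  simp [H2, inv_pow]

end PadicInt

theorem sum_H2_reflect (p m : ℕ) (hp : p.Prime) (hp3 : 3 < p) (hm : m ≤ p - 2) :
    padicNorm p ((∑ s ∈ Finset.range (m + 1), H2 s)
        - ∑ s ∈ Finset.range (p - m - 2 + 1), H2 s)
      ≤ (p : ℚ) ^ (-1 : ℤ) := by
  have := Fact.mk hp
  have hlt : ∀ M ≤ p - 2, ∀ s ∈ range (M + 1), s < p := fun M hM s hs => by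
    rw [mem_range] at hs
    omega
  refine PadicInt.padicNorm_le_inv_of_toZMod_eq_zero (x := ∑ s ∈ range (m + 1), PadicInt.H2Int p s
    - ∑ s ∈ range (p - m - 2 + 1), PadicInt.H2Int p s) ?_ ?_
  · rw [PadicInt.coe_sub, PadicInt.coe_sum, PadicInt.coe_sum, Rat.cast_sub, Rat.cast_sum,
      Rat.cast_sum, sum_congr rfl fun s hs => PadicInt.coe_H2Int (hlt m hm s hs),
      sum_congr rfl fun s hs => PadicInt.coe_H2Int (hlt (p - m - 2) (by omega) s hs)]
  · rw [map_sub, map_sum, map_sum, sub_eq_zero,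
      sum_congr rfl fun s hs => PadicInt.map_H2Int _ (hlt m hm s hs),
      sum_congr rfl fun s hs => PadicInt.map_H2Int _ (hlt (p - m - 2) (by omega) s hs)]
    exact ZMod.sum_range_sum_Icc_inv_sq_reflect hp3 hm
end

section
/- Let p be a prime and let s be an integer with 0 ≤ s ≤ p−1. Then C(p+s,s)·C(p−1,s) ≡ (−1)^s·(1 − p^2·H^{(2)}_s) (mod p^4), as a congruence of rational numbers. -/
/-!
For `0 < k < p` the factors pair up as `(p + k) (p - k) / k² = -(1 - p² / k²)`, so
`C(p+s,s) C(p-1,s) = (-1)^s ∏_{k ≤ s} (1 - p² / k²)`. Every `p² / k²` has `p`-adic norm `p⁻²`,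
so in the expansion of the product all terms beyond the linear ones `-p² ∑ 1/k²` have norm at
most `p⁻⁴`.
-/

open Finset

section ChooseProducts

variable {K : Type*} [Field K] [CharZero K]

theorem Nat.cast_add_choose_eq_prod (n s : ℕ) :
    ((n + s).choose s : K) = ∏ k ∈ Icc 1 s, ((n : K) + k) / k := by
  induction s with
  | zero => simp
  | succ s ih =>
    rw [prod_Icc_succ_top (by omega), ← ih, ← mul_div_assoc,
      eq_div_iff (Nat.cast_ne_zero.2 s.succ_ne_zero)]
    exact_mod_cast (Nat.add_one_mul_choose_eq (n + s) s).symm.trans (by ring)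

theorem Nat.cast_choose_eq_prod (m s : ℕ) :
    (m.choose s : K) = ∏ k ∈ Icc 1 s, ((m : K) + 1 - k) / k := by
  induction s with
  | zero => simp
  | succ s ih =>
    rw [prod_Icc_succ_top (by omega), ← ih, ← mul_div_assoc,
      eq_div_iff (Nat.cast_ne_zero.2 s.succ_ne_zero)]
    rcases le_or_gt s m with hsm | hms
    · have h := congrArg (Nat.cast : ℕ → K) (Nat.choose_succ_right_eq m s)
      push_cast [hsm] at h ⊢
      linear_combination h
    · simp [Nat.choose_eq_zero_of_lt hms, Nat.choose_eq_zero_of_lt (hms.trans s.lt_succ_self)]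

theorem Nat.cast_add_choose_mul_cast_pred_choose_eq_prod {n : ℕ} (hn : 0 < n) (s : ℕ) :
    ((n + s).choose s : K) * ((n - 1).choose s : K)
      = (-1) ^ s * ∏ k ∈ Icc 1 s, (1 - (n : K) ^ 2 / (k : K) ^ 2) := by
  rw [Nat.cast_add_choose_eq_prod, Nat.cast_choose_eq_prod, Nat.cast_pred hn, sub_add_cancel,
    ← prod_mul_distrib, show (-1 : K) ^ s = (-1) ^ #(Icc 1 s) by simp, pow_card_mul_prod]
  refine prod_congr rfl fun k hk => ?_
  have hk : (k : K) ≠ 0 := Nat.cast_ne_zero.2 (by grind)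
  field_simp
  ring

end ChooseProducts

section PadicProducts

variable {p : ℕ} [Fact p.Prime] {ι : Type*} {t : Finset ι} {x : ι → ℚ} {r : ℚ}

theorem padicNorm_prod_one_add_sub_one_le (hr₀ : 0 ≤ r) (hr₁ : r ≤ 1)
    (hx : ∀ i ∈ t, padicNorm p (x i) ≤ r) :
    padicNorm p (∏ i ∈ t, (1 + x i) - 1) ≤ r := by
  classical
  induction t using Finset.induction with
  | empty => simpa using hr₀
  | insert a t ha ih =>
    rw [forall_mem_insert] at hx
    have hP := ih hx.2
    set P := ∏ i ∈ t, (1 + x i)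
    rw [prod_insert ha, show (1 + x a) * P - 1 = (P - 1 + x a * (P - 1)) + x a by ring]
    refine padicNorm.nonarchimedean.trans (max_le (padicNorm.nonarchimedean.trans
      (max_le hP ?_)) hx.1)
    rw [padicNorm.mul]
    nlinarith [padicNorm.nonneg (p := p) (x a), padicNorm.nonneg (p := p) (P - 1)]

theorem padicNorm_prod_one_add_sub_one_sub_sum_le (hr₀ : 0 ≤ r) (hr₁ : r ≤ 1)
    (hx : ∀ i ∈ t, padicNorm p (x i) ≤ r) :
    padicNorm p (∏ i ∈ t, (1 + x i) - 1 - ∑ i ∈ t, x i) ≤ r ^ 2 := by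
  classical
  induction t using Finset.induction with
  | empty => simpa using sq_nonneg r
  | insert a t ha ih =>
    rw [forall_mem_insert] at hx
    have hP := padicNorm_prod_one_add_sub_one_le hr₀ hr₁ hx.2
    set P := ∏ i ∈ t, (1 + x i)
    rw [prod_insert ha, sum_insert ha,
      show (1 + x a) * P - 1 - (x a + ∑ i ∈ t, x i)
        = (P - 1 - ∑ i ∈ t, x i) + x a * (P - 1) by ring]
    refine padicNorm.nonarchimedean.trans (max_le (ih hx.2) ?_)
    rw [padicNorm.mul, sq]
    exact mul_le_mul hx.1 hP (padicNorm.nonneg _) hr₀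

end PadicProducts

theorem padicNorm_sq_div_sq_of_lt {p k : ℕ} [Fact p.Prime] (hk₀ : 0 < k) (hkp : k < p) :
    padicNorm p ((p : ℚ) ^ 2 / (k : ℚ) ^ 2) = (p : ℚ) ^ (-2 : ℤ) := by
  have hk : padicNorm p k = 1 :=
    (padicNorm.nat_eq_one_iff k).2 fun h => (Nat.le_of_dvd hk₀ h).not_gt hkp
  rw [padicNorm.div, IsAbsoluteValue.abv_pow (padicNorm p), IsAbsoluteValue.abv_pow (padicNorm p),
    hk, padicNorm.padicNorm_p_of_prime]
  simp [zpow_neg]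

theorem choose_mul_choose_cong (p s : ℕ) (hp : p.Prime) (hs : s ≤ p - 1) :
    padicNorm p (((p + s).choose s : ℚ) * ((p - 1).choose s : ℚ)
        - (-1 : ℚ) ^ s * (1 - (p : ℚ) ^ 2 * H2 s))
      ≤ (p : ℚ) ^ (-4 : ℤ) := by
  have : Fact p.Prime := ⟨hp⟩
  set x : ℕ → ℚ := fun k => -((p : ℚ) ^ 2 / (k : ℚ) ^ 2)
  have hx : ∀ k ∈ Icc 1 s, padicNorm p (x k) ≤ (p : ℚ) ^ (-2 : ℤ) := fun k hk => by
    have hk := mem_Icc.1 hk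
    rw [padicNorm.neg, padicNorm_sq_div_sq_of_lt hk.1 (by omega)]
  have hrw : ((p + s).choose s : ℚ) * ((p - 1).choose s : ℚ)
        - (-1 : ℚ) ^ s * (1 - (p : ℚ) ^ 2 * H2 s)
      = (-1 : ℚ) ^ s * (∏ k ∈ Icc 1 s, (1 + x k) - 1 - ∑ k ∈ Icc 1 s, x k) := by
    rw [Nat.cast_add_choose_mul_cast_pred_choose_eq_prod hp.pos, H2, mul_sum]
    simp only [x, ← sub_eq_add_neg, sum_neg_distrib, mul_one_div]
    ring
  rw [hrw, padicNorm.mul, IsAbsoluteValue.abv_pow (padicNorm p), padicNorm.neg, padicNorm.one,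
    one_pow, one_mul]
  convert padicNorm_prod_one_add_sub_one_sub_sum_le (by positivity) ?_ hx using 1
  · rw [← zpow_natCast, ← zpow_mul]; norm_num
  · exact zpow_le_one_of_nonpos₀ (by exact_mod_cast hp.one_le) (by norm_num)
end

section
/- Let p be an odd prime. For every integer x, ∑_{k=0}^{p−1} D_k(x)·S_k(x) = p·∑_{m=0}^{2p−2} ∑_{s=0}^{p−1} C(2s,m)·C(m+1,s+1)·C(p+s,s)·C(p−1,s)·x^m/(m+1)^2, as an identity of rational numbers (equivalently, of polynomials in x). -/
/-- The polynomial `D_n(x) = ∑_{k=0}^n C(n,k) C(n+k,k) x^k`. -/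
def Dpoly (n : ℕ) (x : ℚ) : ℚ :=
  ∑ k ∈ Finset.range (n + 1), (n.choose k : ℚ) * ((n + k).choose k : ℚ) * x ^ k

/-- The polynomial `S_n(x) = ∑_{k=0}^n C(n,k) C(n+k,k) x^k/(k+1)`. -/
def Spoly (n : ℕ) (x : ℚ) : ℚ :=
  ∑ k ∈ Finset.range (n + 1), (n.choose k : ℚ) * ((n + k).choose k : ℚ) * x ^ k / (k + 1)

/-!
Write `a_k(s) = C(k,s) C(k+s,s)` for the coefficients of `D_k`. For fixed `k` they satisfy
`(s+1)² a_k(s+1) = (k(k+1) - s(s+1)) a_k(s)`, and any sequence with `a 0 = 1` obeying such a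
recurrence linearizes as `a_i a_j = ∑_s C(i+j,s) C(s,i) C(s,j) a_s` (induction on `j`). Hence the
coefficient of `x^m` in `D_k S_k` is `∑_s w(m,s) a_k(s)` with
`w(m,s) = ∑_{i+j=m} C(m,s) C(s,i) C(s,j)/(j+1) = (2s+1) C(2s,m) C(m+1,s+1)/(m+1)²`, a Vandermonde
sum. Summing over `k < p` only needs the telescoping sum `∑_{k<n} (2s+1) a_k(s) = (n-s) a_n(s)`.
-/

open Finset

theorem sum_range_eq_sum_range_of_eq_zero {M : Type*} [AddCommMonoid M] {f : ℕ → M} {a b : ℕ}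
    (hf : ∀ s, min a b ≤ s → f s = 0) : ∑ s ∈ range a, f s = ∑ s ∈ range b, f s := by
  have key : ∀ {a b : ℕ}, a ≤ b → (∀ s, a ≤ s → f s = 0) →
      ∑ s ∈ range a, f s = ∑ s ∈ range b, f s := fun hab hf =>
    sum_subset (range_subset_range.2 hab) fun s _ hs => hf s (by simpa using hs)
  rcases le_total a b with h | h
  · exact key h (by simpa [min_eq_left h] using hf)
  · exact (key h (by simpa [min_eq_right h] using hf)).symm

theorem sum_range_mul_sum_range_eq_sum_antidiagonal {R : Type*} [CommSemiring R]
    (f g : ℕ → R) (x : R) {n M : ℕ} (hf : ∀ i, n ≤ i → f i = 0) (hg : ∀ j, n ≤ j → g j = 0)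
    (hM : 2 * n ≤ M + 1) :
    (∑ i ∈ range n, f i * x ^ i) * (∑ j ∈ range n, g j * x ^ j)
      = ∑ m ∈ range M, (∑ ij ∈ antidiagonal m, f ij.1 * g ij.2) * x ^ m := by
  have hfM : ∑ i ∈ range n, f i * x ^ i = ∑ i ∈ range M, f i * x ^ i :=
    sum_range_eq_sum_range_of_eq_zero fun i hi => by simp [hf i (by omega)]
  have hgM : ∀ i < n, ∑ j ∈ range n, g j * x ^ j = ∑ j ∈ range (M - i), g j * x ^ j := fun i hi =>
    sum_range_eq_sum_range_of_eq_zero fun j hj => by simp [hg j (by omega)]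
  calc (∑ i ∈ range n, f i * x ^ i) * (∑ j ∈ range n, g j * x ^ j)
      = ∑ i ∈ range M, ∑ j ∈ range (M - i), f i * x ^ i * (g j * x ^ j) := by
        rw [hfM, sum_mul]
        refine sum_congr rfl fun i _ => ?_
        rcases lt_or_ge i n with hi | hi
        · rw [hgM i hi, mul_sum]
        · simp [hf i hi]
    _ = ∑ m ∈ range M, ∑ i ∈ range (m + 1), f i * x ^ i * (g (m - i) * x ^ (m - i)) :=
        (sum_range_diag_flip M _).symm
    _ = ∑ m ∈ range M, (∑ ij ∈ antidiagonal m, f ij.1 * g ij.2) * x ^ m := by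
        refine sum_congr rfl fun m _ => ?_
        rw [Nat.sum_antidiagonal_eq_sum_range_succ (fun i j => f i * g j), sum_mul]
        refine sum_congr rfl fun i hi => ?_
        rw [← pow_mul_pow_sub x (Nat.lt_succ_iff.1 (mem_range.1 hi))]
        ring

theorem cast_choose_succ_right_mul {R : Type*} [CommRing R] (n k : ℕ) :
    (n.choose (k + 1) : R) * (k + 1) = n.choose k * (n - k) := by
  rcases le_or_gt k n with h | h
  · have := congrArg (Nat.cast (R := R)) (Nat.choose_succ_right_eq n k)
    push_cast [Nat.cast_sub h] at this
    exact this
  · simp [Nat.choose_eq_zero_of_lt h, Nat.choose_eq_zero_of_lt (h.trans k.lt_succ_self)]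

def dCoeff (n k : ℕ) : ℕ := n.choose k * (n + k).choose k

theorem dCoeff_zero_right (n : ℕ) : dCoeff n 0 = 1 := by simp [dCoeff]

theorem dCoeff_eq_zero_of_lt {n k : ℕ} (h : n < k) : dCoeff n k = 0 := by
  simp [dCoeff, Nat.choose_eq_zero_of_lt h]

theorem succ_sq_mul_dCoeff_succ {K : Type*} [CommRing K] (n s : ℕ) :
    ((s : K) + 1) ^ 2 * dCoeff n (s + 1) = ((n : K) * (n + 1) - s * (s + 1)) * dCoeff n s := by
  have h1 := cast_choose_succ_right_mul (R := K) n s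
  have h2 := congrArg (Nat.cast (R := K)) (Nat.add_one_mul_choose_eq (n + s) s)
  push_cast at h2
  simp only [dCoeff, Nat.cast_mul, ← add_assoc]
  linear_combination ((s : K) + 1) * ((n + s + 1).choose (s + 1) : K) * h1
    - (n.choose s : K) * ((n : K) - s) * h2

theorem mul_choose_sub_one (n s : ℕ) : n * (n - 1).choose s = (n - s) * n.choose s := by
  cases n with
  | zero => simp
  | succ n => rw [Nat.add_sub_cancel, mul_comm, Nat.choose_mul_succ_eq, mul_comm]

theorem sum_range_mul_dCoeff (n s : ℕ) :
    ∑ k ∈ range n, (2 * s + 1) * dCoeff k s = (n - s) * dCoeff n s := by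
  induction n with
  | zero => simp
  | succ n ih =>
    rw [sum_range_succ, ih]
    rcases lt_or_ge n s with h | h
    · simp [dCoeff_eq_zero_of_lt h, Nat.sub_eq_zero_of_le h]
    · have h1 := Nat.choose_mul_succ_eq n s
      have h2 := Nat.choose_mul_succ_eq (n + s) s
      rw [show n + s + 1 - s = n + 1 by omega] at h2
      calc (n - s) * dCoeff n s + (2 * s + 1) * dCoeff n s
          = n.choose s * ((n + s).choose s * (n + s + 1)) := by
            rw [dCoeff, ← add_mul, show n - s + (2 * s + 1) = n + s + 1 by omega]; ring
        _ = (n + 1 - s) * dCoeff (n + 1) s := by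
            rw [h2, dCoeff, show n + 1 + s = n + s + 1 by ring, mul_left_comm, h1]
            ring

/-- `C(i+j,i)` times the trinomial coefficient `s! / ((s-i)! (s-j)! (i+j-s)!)`, written without
subtraction so that it vanishes unless `max i j ≤ s ≤ i + j`. -/
def linCoeff (i j s : ℕ) : ℕ := (i + j).choose s * s.choose i * s.choose j

theorem linCoeff_eq_zero_of_lt {i j s : ℕ} (h : i + j < s) : linCoeff i j s = 0 := by
  simp [linCoeff, Nat.choose_eq_zero_of_lt h]

theorem linCoeff_zero_right_self (i : ℕ) : linCoeff i 0 i = 1 := by simp [linCoeff]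

theorem linCoeff_zero_right_of_ne {i s : ℕ} (h : s ≠ i) : linCoeff i 0 s = 0 := by
  rcases lt_or_gt_of_ne h with h | h
  · simp [linCoeff, Nat.choose_eq_zero_of_lt h]
  · exact linCoeff_eq_zero_of_lt (by omega)

section Field

variable {K : Type*} [Field K] [CharZero K]

-- At `s = 0` the truncated `s - 1` is harmless: that term carries the factor `s ^ 2`.
theorem succ_sq_mul_linCoeff_succ (i j s : ℕ) :
    ((j : K) + 1) ^ 2 * linCoeff i (j + 1) s
      = (s : K) ^ 2 * linCoeff i j (s - 1) + ((s : K) * (s + 1) - j * (j + 1)) * linCoeff i j s := by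
  obtain _ | r := s
  · rcases Nat.eq_zero_or_pos j with rfl | hj
    · simp [linCoeff]
    · simp [linCoeff, Nat.choose_eq_zero_of_lt (Nat.succ_pos j), Nat.choose_eq_zero_of_lt hj]
  have h1 := congrArg (Nat.cast (R := K)) (Nat.add_one_mul_choose_eq (i + j) r)
  have h2 := congrArg (Nat.cast (R := K)) (Nat.add_one_mul_choose_eq r j)
  have h3 := congrArg (Nat.cast (R := K)) (Nat.add_one_mul_choose_eq r i)
  have h4 := cast_choose_succ_right_mul (R := K) (i + j) r
  have h5 := cast_choose_succ_right_mul (R := K) (r + 1) j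
  have h6 := cast_choose_succ_right_mul (R := K) (r + 1) i
  push_cast at h1 h2 h3 h4 h5 h6
  apply mul_left_cancel₀ (Nat.cast_add_one_ne_zero r)
  simp only [linCoeff, Nat.cast_mul, Nat.add_sub_cancel, ← add_assoc, Nat.cast_add, Nat.cast_one]
  set n : K := (i : K) + j
  set X : K := (((i + j).choose r : ℕ) : K)
  set V : K := (((r + 1).choose i : ℕ) : K)
  linear_combination -((j : K) + 1) ^ 2 * V * ((r + 1).choose (j + 1) : K) * h1
    + ((r + j + 2) * (n - r) - (j + 1) * (n + 1)) * X * V * h2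
    - ((r : K) + 1) ^ 2 * X * (r.choose j : K) * (h3 + h6)
    - ((r : K) + j + 2) * (r + 1 - j) * V * ((r + 1).choose j : K) * h4
    + ((r : K) + j + 2) * (n - r) * V * X * h5

theorem mul_eq_sum_linCoeff_mul (a : ℕ → K) (u : K) (ha0 : a 0 = 1)
    (hrec : ∀ s : ℕ, ((s : K) + 1) ^ 2 * a (s + 1) = (u - s * (s + 1)) * a s) (i j : ℕ) :
    a i * a j = ∑ s ∈ range (i + j + 1), (linCoeff i j s : K) * a s := by
  induction j with
  | zero =>
    rw [sum_eq_single_of_mem i (by simp) fun s _ hs => by simp [linCoeff_zero_right_of_ne hs]]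
    simp [ha0, linCoeff_zero_right_self]
  | succ j ih =>
    apply mul_left_cancel₀ (pow_ne_zero 2 (Nat.cast_add_one_ne_zero j))
    set N := i + j + 1
    have hlow : ∑ s ∈ range (N + 1), (s : K) ^ 2 * linCoeff i j (s - 1) * a s
        = ∑ s ∈ range N, ((s : K) + 1) ^ 2 * linCoeff i j s * a (s + 1) := by
      simp [sum_range_succ']
    have htop : ∑ s ∈ range (N + 1), ((s : K) * (s + 1) - j * (j + 1)) * linCoeff i j s * a s
        = ∑ s ∈ range N, ((s : K) * (s + 1) - j * (j + 1)) * linCoeff i j s * a s := by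
      rw [sum_range_succ, linCoeff_eq_zero_of_lt (Nat.lt_succ_self (i + j))]
      simp
    calc ((j : K) + 1) ^ 2 * (a i * a (j + 1)) = (u - j * (j + 1)) * (a i * a j) := by
          rw [mul_left_comm, hrec]; ring
      _ = ∑ s ∈ range N, (((s : K) + 1) ^ 2 * linCoeff i j s * a (s + 1)
            + ((s : K) * (s + 1) - j * (j + 1)) * linCoeff i j s * a s) := by
          rw [ih, mul_sum]
          exact sum_congr rfl fun s _ => by linear_combination -(linCoeff i j s : K) * hrec s
      _ = ∑ s ∈ range (N + 1), ((s : K) ^ 2 * linCoeff i j (s - 1)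
            + ((s : K) * (s + 1) - j * (j + 1)) * linCoeff i j s) * a s := by
          simp only [add_mul, sum_add_distrib, hlow, htop]
      _ = ((j : K) + 1) ^ 2 * ∑ s ∈ range (i + (j + 1) + 1), (linCoeff i (j + 1) s : K) * a s := by
          simp only [mul_sum, ← mul_assoc, succ_sq_mul_linCoeff_succ, N, ← add_assoc]

theorem sum_antidiagonal_linCoeff_div (m s : ℕ) :
    ∑ ij ∈ antidiagonal m, (linCoeff ij.1 ij.2 s : K) / (ij.2 + 1)
      = (2 * s + 1) * (2 * s).choose m * (m + 1).choose (s + 1) / (m + 1) ^ 2 := by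
  have hvand : ∑ ij ∈ antidiagonal m, s.choose ij.1 * (s + 1).choose (ij.2 + 1) + s.choose (m + 1)
      = (2 * s + 1).choose (m + 1) := by
    rw [show 2 * s + 1 = s + (s + 1) by ring, Nat.add_choose_eq, Nat.sum_antidiagonal_succ']
    simp [add_comm]
  have hvanish : m.choose s * s.choose (m + 1) = 0 := by
    rcases le_or_gt s m with h | h
    · simp [Nat.choose_eq_zero_of_lt (Nat.lt_succ_of_le h)]
    · simp [Nat.choose_eq_zero_of_lt h]
  have hterm : ∀ ij ∈ antidiagonal m, (linCoeff ij.1 ij.2 s : K) / (ij.2 + 1)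
      = m.choose s * (s.choose ij.1 * (s + 1).choose (ij.2 + 1) : ℕ) / (s + 1) := by
    rintro ⟨i, j⟩ hij
    rw [HasAntidiagonal.mem_antidiagonal] at hij
    have h := congrArg (Nat.cast (R := K)) (Nat.add_one_mul_choose_eq s j)
    push_cast at h ⊢
    rw [linCoeff, hij, div_eq_div_iff (Nat.cast_add_one_ne_zero j) (Nat.cast_add_one_ne_zero s)]
    push_cast
    linear_combination (m.choose s * s.choose i : K) * h
  have e1 := congrArg (Nat.cast (R := K)) (Nat.add_one_mul_choose_eq (2 * s) m)
  have e2 := congrArg (Nat.cast (R := K)) (Nat.add_one_mul_choose_eq m s)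
  have e3 := congrArg (Nat.cast (R := K)) (congrArg (m.choose s * ·) hvand)
  have e4 := congrArg (Nat.cast (R := K)) hvanish
  push_cast at e1 e2 e3 e4
  rw [sum_congr rfl hterm, ← sum_div, ← mul_sum,
    div_eq_div_iff (Nat.cast_add_one_ne_zero s) (pow_ne_zero 2 (Nat.cast_add_one_ne_zero m))]
  push_cast
  linear_combination ((m : K) + 1) ^ 2 * (e3 - e4) - ((m + 1).choose (s + 1) * (s + 1) : K) * e1
    + ((2 * s + 1).choose (m + 1) * (m + 1) : K) * e2

theorem sum_antidiagonal_mul_div_eq (a : ℕ → K) (u : K) (ha0 : a 0 = 1)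
    (hrec : ∀ s : ℕ, ((s : K) + 1) ^ 2 * a (s + 1) = (u - s * (s + 1)) * a s) (m : ℕ) :
    ∑ ij ∈ antidiagonal m, a ij.1 * (a ij.2 / (ij.2 + 1))
      = ∑ s ∈ range (m + 1),
          (2 * s + 1) * (2 * s).choose m * (m + 1).choose (s + 1) / (m + 1) ^ 2 * a s := by
  calc ∑ ij ∈ antidiagonal m, a ij.1 * (a ij.2 / (ij.2 + 1))
      = ∑ ij ∈ antidiagonal m, ∑ s ∈ range (m + 1), (linCoeff ij.1 ij.2 s : K) / (ij.2 + 1) * a s := by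
        refine sum_congr rfl fun ij hij => ?_
        rw [mul_div_assoc', mul_eq_sum_linCoeff_mul a u ha0 hrec, HasAntidiagonal.mem_antidiagonal.1 hij,
          sum_div]
        exact sum_congr rfl fun s _ => by ring
    _ = _ := by
        rw [sum_comm]
        simp only [← sum_mul, sum_antidiagonal_linCoeff_div]

end Field

theorem Dpoly_eq_sum_range {k n : ℕ} (h : k < n) (x : ℚ) :
    Dpoly k x = ∑ i ∈ range n, (dCoeff k i : ℚ) * x ^ i := by
  rw [Dpoly]
  push_cast [dCoeff]
  exact sum_range_eq_sum_range_of_eq_zero fun i hi => by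
    simp [Nat.choose_eq_zero_of_lt (show k < i by omega)]

theorem Spoly_eq_sum_range {k n : ℕ} (h : k < n) (x : ℚ) :
    Spoly k x = ∑ j ∈ range n, (dCoeff k j / (j + 1) : ℚ) * x ^ j := by
  rw [Spoly]
  push_cast [dCoeff]
  simp_rw [div_mul_eq_mul_div]
  exact sum_range_eq_sum_range_of_eq_zero fun j hj => by
    simp [Nat.choose_eq_zero_of_lt (show k < j by omega)]

theorem Dpoly_mul_Spoly_eq_sum (k : ℕ) (x : ℚ) {M N : ℕ} (hM : 2 * k < M) (hN : k < N) :
    Dpoly k x * Spoly k x = ∑ m ∈ range M, ∑ s ∈ range N,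
      (2 * s).choose m * (m + 1).choose (s + 1) * ((2 * s + 1) * dCoeff k s) * x ^ m / (m + 1) ^ 2 := by
  have hvanish : ∀ i, k + 1 ≤ i → (dCoeff k i : ℚ) = 0 := fun i hi => by
    rw [dCoeff_eq_zero_of_lt (by omega), Nat.cast_zero]
  rw [Dpoly_eq_sum_range k.lt_succ_self, Spoly_eq_sum_range k.lt_succ_self,
    sum_range_mul_sum_range_eq_sum_antidiagonal (n := k + 1) (M := M) _ _ _ hvanish
      (fun j hj => by rw [hvanish j hj, zero_div]) (by omega)]
  refine sum_congr rfl fun m _ => ?_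
  rw [sum_antidiagonal_mul_div_eq (fun s => (dCoeff k s : ℚ)) (k * (k + 1)) (by rw [dCoeff_zero_right, Nat.cast_one])
    (fun s => succ_sq_mul_dCoeff_succ k s), sum_mul]
  refine Eq.trans (sum_congr rfl fun s _ => by ring) (sum_range_eq_sum_range_of_eq_zero fun s hs => ?_)
  rcases le_or_gt (m + 1) s with h | h
  · simp [Nat.choose_eq_zero_of_lt (show m + 1 < s + 1 by omega)]
  · simp [hvanish s (by omega)]

theorem sum_Dpoly_mul_Spoly_eq_general (p : ℕ) (x : ℤ) :
    ∑ k ∈ Finset.range p, Dpoly k (x : ℚ) * Spoly k (x : ℚ)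
      = (p : ℚ) * ∑ m ∈ Finset.range (2 * p - 1), ∑ s ∈ Finset.range p,
          ((2 * s).choose m : ℚ) * ((m + 1).choose (s + 1) : ℚ) * ((p + s).choose s : ℚ)
            * ((p - 1).choose s : ℚ) * (x : ℚ) ^ m / (m + 1) ^ 2 := by
  have hsum : ∀ s, ∑ k ∈ range p, ((2 * s + 1) * dCoeff k s : ℚ)
      = p * (p + s).choose s * (p - 1).choose s := fun s => by
    rw [mul_right_comm]
    exact_mod_cast (sum_range_mul_dCoeff p s).trans
      (by rw [mul_choose_sub_one, dCoeff]; ring)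
  calc ∑ k ∈ range p, Dpoly k (x : ℚ) * Spoly k (x : ℚ)
      = ∑ k ∈ range p, ∑ m ∈ range (2 * p - 1), ∑ s ∈ range p,
          (2 * s).choose m * (m + 1).choose (s + 1) * ((2 * s + 1) * dCoeff k s) * (x : ℚ) ^ m
            / (m + 1) ^ 2 :=
        sum_congr rfl fun k hk =>
          Dpoly_mul_Spoly_eq_sum k x (by have := mem_range.1 hk; omega) (mem_range.1 hk)
    _ = _ := by
        rw [sum_comm, mul_sum]
        refine sum_congr rfl fun m _ => ?_
        rw [sum_comm, mul_sum]
        refine sum_congr rfl fun s _ => ?_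
        simp only [← sum_div, ← sum_mul, ← mul_sum, hsum]
        ring

theorem sum_Dpoly_mul_Spoly_eq (p : ℕ) (hp : p.Prime) (hodd : Odd p) (x : ℤ) :
    ∑ k ∈ Finset.range p, Dpoly k (x : ℚ) * Spoly k (x : ℚ)
      = (p : ℚ) * ∑ m ∈ Finset.range (2 * p - 1), ∑ s ∈ Finset.range p,
          ((2 * s).choose m : ℚ) * ((m + 1).choose (s + 1) : ℚ) * ((p + s).choose s : ℚ)
            * ((p - 1).choose s : ℚ) * (x : ℚ) ^ m / (m + 1) ^ 2 :=
  sum_Dpoly_mul_Spoly_eq_general p x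
end

section
/- Let p be an odd prime. Then p^2·∑_{k=1}^{p−1} (−1)^k/k^2 ≡ −p^3·∑_{k=1}^{p−1} (−1)^k/k^3 (mod p^4), as a congruence of rational numbers. -/
/-!
Since `p²·(-1)ᵏ/k² + p³·(-1)ᵏ/k³ = p²·(-1)ᵏ(k + p)/k³`, the difference is `p²·T` with
`T = ∑ (-1)ᵏ(k + p)/k³`. Pairing `k` with `p - k`, which has the opposite sign since `p` is odd,
and using `(x + p)/x³ - (y + p)/y³ = p³(y - x)/(x³y³)` for `x + y = p`, shows that `2T` is `p³`
times a `p`-integral number. Hence `p²·T` is even divisible by `p⁵`.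
-/

open Finset IsAbsoluteValue

lemma add_sum_div_cube_sub_add_sum_div_cube {K : Type*} [Field K] {x y : K}
    (hx : x ≠ 0) (hy : y ≠ 0) :
    (x + (x + y)) / x ^ 3 - (y + (x + y)) / y ^ 3 = (x + y) ^ 3 * (y - x) / (x ^ 3 * y ^ 3) := by
  field_simp
  ring

lemma neg_one_pow_sub_of_odd {R : Type*} [Ring R] {p k : ℕ} (hp : Odd p) (hk : k ≤ p) :
    (-1 : R) ^ (p - k) = -(-1) ^ k := by
  rcases Nat.even_or_odd k with hk' | hk'
  · rw [(Nat.Odd.sub_even hk hp hk').neg_one_pow, hk'.neg_one_pow]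
  · rw [(Nat.Odd.sub_odd hp hk').neg_one_pow, hk'.neg_one_pow, neg_neg]

lemma sum_Icc_one_sub_reflect {M : Type*} [AddCommMonoid M] (f : ℕ → M) (n : ℕ) :
    ∑ k ∈ Icc 1 (n - 1), f (n - k) = ∑ k ∈ Icc 1 (n - 1), f k := by
  refine sum_nbij' (n - ·) (n - ·) ?_ ?_ ?_ ?_ fun _ _ => rfl <;>
    · intro k hk
      simp only [mem_Icc] at hk ⊢
      omega

lemma padicNorm_natCast_of_pos_of_lt {p k : ℕ} [Fact p.Prime] (hk : 0 < k) (hkp : k < p) :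
    padicNorm p k = 1 :=
  (padicNorm.nat_eq_one_iff k).2 (Nat.not_dvd_of_pos_of_lt hk hkp)

def alternatingTerm (p k : ℕ) : ℚ := (-1) ^ k * ((k + p) / k ^ 3)

lemma alternatingTerm_add_alternatingTerm_sub {p k : ℕ} (hp : Odd p) (hk : 0 < k) (hkp : k < p) :
    alternatingTerm p k + alternatingTerm p (p - k)
      = (-1) ^ k * (p ^ 3 * (((p - k : ℕ) : ℚ) - k) / (k ^ 3 * ((p - k : ℕ) : ℚ) ^ 3)) := by
  have hsum : (k : ℚ) + ((p - k : ℕ) : ℚ) = p := by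
    rw [Nat.cast_sub hkp.le]
    ring
  have hk0 : (k : ℚ) ≠ 0 := by positivity
  have hpk0 : ((p - k : ℕ) : ℚ) ≠ 0 := by
    rw [Nat.cast_ne_zero]
    omega
  have hcube := add_sum_div_cube_sub_add_sum_div_cube hk0 hpk0
  rw [hsum] at hcube
  rw [← hcube, alternatingTerm, alternatingTerm, neg_one_pow_sub_of_odd hp hkp.le]
  ring

lemma padicNorm_alternatingTerm_add_alternatingTerm_sub_le {p k : ℕ} [Fact p.Prime] (hp : Odd p)
    (hk : 0 < k) (hkp : k < p) :
    padicNorm p (alternatingTerm p k + alternatingTerm p (p - k)) ≤ (p : ℚ)⁻¹ ^ 3 := by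
  have hnum : padicNorm p (((p - k : ℕ) : ℚ) - k) ≤ 1 := by
    exact_mod_cast padicNorm.of_int (p := p) ((p - k : ℕ) - k : ℤ)
  rw [alternatingTerm_add_alternatingTerm_sub hp hk hkp, padicNorm.mul, padicNorm.div,
    padicNorm.mul, padicNorm.mul, abv_pow (padicNorm p), abv_pow (padicNorm p),
    abv_pow (padicNorm p), abv_pow (padicNorm p), padicNorm.neg, padicNorm.one,
    padicNorm.padicNorm_p_of_prime, padicNorm_natCast_of_pos_of_lt hk hkp,
    padicNorm_natCast_of_pos_of_lt (by omega) (by omega : p - k < p)]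
  simpa using mul_le_mul_of_nonneg_left hnum (by positivity : (0 : ℚ) ≤ (p : ℚ)⁻¹ ^ 3)

lemma padicNorm_sum_alternatingTerm_le {p : ℕ} [Fact p.Prime] (hp : Odd p) :
    padicNorm p (∑ k ∈ Icc 1 (p - 1), alternatingTerm p k) ≤ (p : ℚ)⁻¹ ^ 3 := by
  have hp2 : p ≠ 2 := by
    rintro rfl
    exact absurd hp (by decide)
  have htwo : padicNorm p 2 = 1 := by
    have := (Fact.out : p.Prime).two_le
    exact_mod_cast padicNorm_natCast_of_pos_of_lt (p := p) two_pos (by omega)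
  have hpaired : 2 * ∑ k ∈ Icc 1 (p - 1), alternatingTerm p k
      = ∑ k ∈ Icc 1 (p - 1), (alternatingTerm p k + alternatingTerm p (p - k)) := by
    rw [sum_add_distrib, sum_Icc_one_sub_reflect (alternatingTerm p), two_mul]
  rw [← one_mul (padicNorm p _), ← htwo, ← padicNorm.mul, hpaired]
  refine padicNorm.sum_le' (fun k hk => ?_) (by positivity)
  rw [mem_Icc] at hk
  exact padicNorm_alternatingTerm_add_alternatingTerm_sub_le hp (by omega) (by omega)

theorem alternating_harmonic_two_three (p : ℕ) (hp : p.Prime) (hodd : Odd p) :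
    padicNorm p ((p : ℚ) ^ 2 * (∑ k ∈ Finset.Icc 1 (p - 1), (-1 : ℚ) ^ k / (k : ℚ) ^ 2)
        - (-(p : ℚ) ^ 3 * ∑ k ∈ Finset.Icc 1 (p - 1), (-1 : ℚ) ^ k / (k : ℚ) ^ 3))
      ≤ (p : ℚ) ^ (-4 : ℤ) := by
  have : Fact p.Prime := ⟨hp⟩
  have hsplit : (p : ℚ) ^ 2 * (∑ k ∈ Icc 1 (p - 1), (-1 : ℚ) ^ k / (k : ℚ) ^ 2)
        - (-(p : ℚ) ^ 3 * ∑ k ∈ Icc 1 (p - 1), (-1 : ℚ) ^ k / (k : ℚ) ^ 3)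
      = (p : ℚ) ^ 2 * ∑ k ∈ Icc 1 (p - 1), alternatingTerm p k := by
    simp only [mul_sum, ← sum_sub_distrib]
    refine sum_congr rfl fun k hk => ?_
    have hk0 : (k : ℚ) ≠ 0 := by
      rw [mem_Icc] at hk
      exact Nat.cast_ne_zero.2 (by omega)
    rw [alternatingTerm]
    field_simp
    ring
  have hp1 : (1 : ℚ) ≤ p := by exact_mod_cast hp.one_lt.le
  rw [hsplit, padicNorm.mul, abv_pow (padicNorm p), padicNorm.padicNorm_p_of_prime]
  calc (p : ℚ)⁻¹ ^ 2 * padicNorm p (∑ k ∈ Icc 1 (p - 1), alternatingTerm p k)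
      ≤ (p : ℚ)⁻¹ ^ 2 * (p : ℚ)⁻¹ ^ 3 := by
        gcongr
        exact padicNorm_sum_alternatingTerm_le hodd
    _ = (p : ℚ)⁻¹ ^ 4 * (p : ℚ)⁻¹ := by ring
    _ ≤ (p : ℚ)⁻¹ ^ 4 := mul_le_of_le_one_right (by positivity) (inv_le_one_of_one_le₀ hp1)
    _ = (p : ℚ) ^ (-4 : ℤ) := by rw [inv_pow, zpow_neg, zpow_ofNat]
end
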